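/- arXiv:2405.06554 — 4 statements merged into one kernel-verified Lean document; each statement's English description precedes it below -/
import Mathlib

section
/- Fix real constants L > 0, c₁ > 0, c₂ > 0 and an integer M ≥ 2. For real T > 1 define ε(T) = (log T)^{−1/4}, l(T) = c₁·T^{−1/6}, I(T) = c₂·ε(T), b(T) = ( l(T)³ / (4·(1+l(T))³) )·( I(T)/(4L) )², B(T) = 2 + ( 2·(1+l(T))² / l(T)² )·( 4L/I(T) )², and q(T) = 1 + (1/b(T))·( 1 + log( M·B(T)·(1 + b(T)) ) ). Then q(T)/T → 0 as T → ∞; moreover there exist constants C₀ > 0 and T₀ such that q(T) ≤ C₀·T^{5/6}·(log T)^{1/2} for all T ≥ T₀. -/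
open Filter

/-!
Since `l ≍ T^{-1/6}` and `I ≍ (log T)^{-1/4}`, the factor `1/b ≍ l⁻³ I⁻²` is of order
`T^{1/2} (log T)^{1/2}`, while `M B (1 + b)` grows at most linearly in `T`, so the logarithm in
`q` is `O(log T) = O(T^{1/3})`. Hence `q = O(T^{5/6} (log T)^{1/2})`, which is `o(T)`.
-/

open Asymptotics Real

lemma isLittleO_rpow_mul_log_rpow {a s : ℝ} (r : ℝ) (h : a < s) :
    (fun x => x ^ a * log x ^ r) =o[atTop] fun x => x ^ s := by
  refine ((isBigO_refl (fun x : ℝ => x ^ a) atTop).mul_isLittleO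
    (isLittleO_log_rpow_rpow_atTop r (sub_pos.2 h))).congr' EventuallyEq.rfl ?_
  filter_upwards [eventually_gt_atTop 0] with x hx
  rw [← rpow_add hx, add_sub_cancel]

lemma isBigO_log_comp_of_isBigO_id {f : ℝ → ℝ} (hf : f =O[atTop] id)
    (h1 : ∀ᶠ x in atTop, 1 ≤ f x) : (fun x => log (f x)) =O[atTop] log := by
  obtain ⟨C, hC⟩ := hf.bound
  refine (IsBigO.of_norm_eventuallyLE ?_).trans (isBigO_log_const_mul_log_atTop C)
  filter_upwards [hC, h1, eventually_ge_atTop 0] with x hCx h1x hx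
  rw [norm_of_nonneg (log_nonneg h1x)]
  refine log_le_log (by linarith) ?_
  rwa [norm_of_nonneg (by linarith), id, norm_of_nonneg hx] at hCx

lemma inv_const_mul_rpow_neg {x : ℝ} (hx : 0 ≤ x) (c y : ℝ) :
    (c * x ^ (-y))⁻¹ = c⁻¹ * x ^ y := by
  rw [mul_inv, rpow_neg hx, inv_inv]

namespace Threshold

section Formulas

variable {L l I c : ℝ}

lemma inv_b_le (hl : 0 ≤ l) (hlc : l ≤ c) :
    (l ^ 3 / (4 * (1 + l) ^ 3) * (I / (4 * L)) ^ 2)⁻¹ ≤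
      64 * (1 + c) ^ 3 * L ^ 2 * (l⁻¹ ^ 3 * I⁻¹ ^ 2) := by
  calc (l ^ 3 / (4 * (1 + l) ^ 3) * (I / (4 * L)) ^ 2)⁻¹
      = 64 * (1 + l) ^ 3 * L ^ 2 * (l⁻¹ ^ 3 * I⁻¹ ^ 2) := by
        simp only [div_eq_mul_inv, mul_inv, mul_pow, inv_pow, inv_inv]; ring
    _ ≤ 64 * (1 + c) ^ 3 * L ^ 2 * (l⁻¹ ^ 3 * I⁻¹ ^ 2) := by gcongr

lemma b_le_sq (hl : 0 ≤ l) :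
    l ^ 3 / (4 * (1 + l) ^ 3) * (I / (4 * L)) ^ 2 ≤ (I / (4 * L)) ^ 2 := by
  refine mul_le_of_le_one_left (sq_nonneg _) ?_
  rw [div_le_one (by positivity)]
  nlinarith [pow_le_pow_left₀ hl (le_add_of_nonneg_left zero_le_one : l ≤ 1 + l) 3]

lemma B_le (hl : 0 ≤ l) (hlc : l ≤ c) :
    2 + 2 * (1 + l) ^ 2 / l ^ 2 * (4 * L / I) ^ 2 ≤
      2 + 32 * (1 + c) ^ 2 * L ^ 2 * (l⁻¹ ^ 2 * I⁻¹ ^ 2) := by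
  calc 2 + 2 * (1 + l) ^ 2 / l ^ 2 * (4 * L / I) ^ 2
      = 2 + 32 * (1 + l) ^ 2 * L ^ 2 * (l⁻¹ ^ 2 * I⁻¹ ^ 2) := by ring
    _ ≤ 2 + 32 * (1 + c) ^ 2 * L ^ 2 * (l⁻¹ ^ 2 * I⁻¹ ^ 2) := by gcongr

end Formulas

section Asymptotics

variable {L c₁ c₂ : ℝ} {M : ℕ} {l I b B q : ℝ → ℝ}

lemma inv_pow_mul_inv_sq_eq (hl : ∀ T > 1, l T = c₁ * T ^ (-(1 : ℝ) / 6))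
    (hI : ∀ T > 1, I T = c₂ * log T ^ (-(1 : ℝ) / 4)) (n : ℕ) {T : ℝ} (hT : 1 < T) :
    (l T)⁻¹ ^ n * (I T)⁻¹ ^ 2 =
      c₁⁻¹ ^ n * c₂⁻¹ ^ 2 * (T ^ ((n : ℝ) / 6) * log T ^ ((1 : ℝ) / 2)) := by
  have hT₀ : 0 ≤ T := by linarith
  have hlog := log_nonneg hT.le
  rw [hl T hT, hI T hT, neg_div, neg_div, inv_const_mul_rpow_neg hT₀,
    inv_const_mul_rpow_neg hlog, mul_pow, mul_pow, ← rpow_mul_natCast hT₀,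
    ← rpow_mul_natCast hlog]
  ring_nf

lemma l_nonneg_and_le (hc₁ : 0 < c₁) (hl : ∀ T > 1, l T = c₁ * T ^ (-(1 : ℝ) / 6))
    {T : ℝ} (hT : 1 < T) : 0 ≤ l T ∧ l T ≤ c₁ := by
  rw [hl T hT]
  exact ⟨by positivity, mul_le_of_le_one_right hc₁.le
    (rpow_le_one_of_one_le_of_nonpos hT.le (by norm_num))⟩

lemma inv_b_isBigO (hc₁ : 0 < c₁) (hl : ∀ T > 1, l T = c₁ * T ^ (-(1 : ℝ) / 6))
    (hI : ∀ T > 1, I T = c₂ * log T ^ (-(1 : ℝ) / 4))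
    (hb : ∀ T > 1, b T = (l T ^ 3 / (4 * (1 + l T) ^ 3)) * (I T / (4 * L)) ^ 2) :
    (fun T => (b T)⁻¹) =O[atTop] fun T => T ^ ((1 : ℝ) / 2) * log T ^ ((1 : ℝ) / 2) := by
  refine .of_bound (64 * (1 + c₁) ^ 3 * L ^ 2 * (c₁⁻¹ ^ 3 * c₂⁻¹ ^ 2)) ?_
  filter_upwards [eventually_gt_atTop 1] with T hT
  obtain ⟨hl₀, hlc⟩ := l_nonneg_and_le hc₁ hl hT
  have hlog := log_nonneg hT.le
  rw [hb T hT, norm_of_nonneg (by positivity), norm_of_nonneg (by positivity)]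
  calc _ ≤ 64 * (1 + c₁) ^ 3 * L ^ 2 * ((l T)⁻¹ ^ 3 * (I T)⁻¹ ^ 2) := inv_b_le hl₀ hlc
    _ = _ := by rw [inv_pow_mul_inv_sq_eq hl hI 3 hT]; norm_num; ring

lemma B_isBigO_id (hc₁ : 0 < c₁) (hl : ∀ T > 1, l T = c₁ * T ^ (-(1 : ℝ) / 6))
    (hI : ∀ T > 1, I T = c₂ * log T ^ (-(1 : ℝ) / 4))
    (hB : ∀ T > 1, B T = 2 + (2 * (1 + l T) ^ 2 / l T ^ 2) * (4 * L / I T) ^ 2) :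
    B =O[atTop] id := by
  set A := 32 * (1 + c₁) ^ 2 * L ^ 2 * (c₁⁻¹ ^ 2 * c₂⁻¹ ^ 2)
  have hpow : (fun T => T ^ ((1 : ℝ) / 3) * log T ^ ((1 : ℝ) / 2)) =o[atTop] id :=
    (isLittleO_rpow_mul_log_rpow _ (by norm_num : (1 : ℝ) / 3 < 1)).congr_right rpow_one
  have hmajorant :
      (fun T => 2 + A * (T ^ ((1 : ℝ) / 3) * log T ^ ((1 : ℝ) / 2))) =O[atTop] id :=
    ((isLittleO_const_id_atTop (2 : ℝ)).add (hpow.const_mul_left A)).isBigO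
  refine (IsBigO.of_bound 1 ?_).trans hmajorant
  filter_upwards [eventually_gt_atTop 1] with T hT
  obtain ⟨hl₀, hlc⟩ := l_nonneg_and_le hc₁ hl hT
  have hlog := log_nonneg hT.le
  rw [hB T hT, norm_of_nonneg (by positivity), norm_of_nonneg (by positivity), one_mul]
  calc _ ≤ 2 + 32 * (1 + c₁) ^ 2 * L ^ 2 * ((l T)⁻¹ ^ 2 * (I T)⁻¹ ^ 2) := B_le hl₀ hlc
    _ = _ := by rw [inv_pow_mul_inv_sq_eq hl hI 2 hT]; norm_num; ring

lemma one_add_b_isBigO_one (hc₁ : 0 < c₁) (hc₂ : 0 < c₂)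
    (hl : ∀ T > 1, l T = c₁ * T ^ (-(1 : ℝ) / 6))
    (hI : ∀ T > 1, I T = c₂ * log T ^ (-(1 : ℝ) / 4))
    (hb : ∀ T > 1, b T = (l T ^ 3 / (4 * (1 + l T) ^ 3)) * (I T / (4 * L)) ^ 2) :
    (fun T => 1 + b T) =O[atTop] fun _ => (1 : ℝ) := by
  refine .of_bound (1 + (c₂ / (4 * L)) ^ 2) ?_
  filter_upwards [eventually_gt_atTop 1, tendsto_log_atTop.eventually_ge_atTop 1] with T hT hlog
  obtain ⟨hl₀, -⟩ := l_nonneg_and_le hc₁ hl hT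
  have hI₀ : 0 ≤ I T := by rw [hI T hT]; positivity
  have hIc : I T ≤ c₂ := by
    rw [hI T hT]
    exact mul_le_of_le_one_right hc₂.le (rpow_le_one_of_one_le_of_nonpos hlog (by norm_num))
  rw [hb T hT, norm_of_nonneg (by positivity), norm_one, mul_one]
  gcongr
  exact (b_le_sq hl₀).trans (by rw [div_pow, div_pow]; gcongr)

lemma log_mul_B_mul_isBigO_log (hM : 2 ≤ M) (hc₁ : 0 < c₁) (hc₂ : 0 < c₂)
    (hl : ∀ T > 1, l T = c₁ * T ^ (-(1 : ℝ) / 6))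
    (hI : ∀ T > 1, I T = c₂ * log T ^ (-(1 : ℝ) / 4))
    (hb : ∀ T > 1, b T = (l T ^ 3 / (4 * (1 + l T) ^ 3)) * (I T / (4 * L)) ^ 2)
    (hB : ∀ T > 1, B T = 2 + (2 * (1 + l T) ^ 2 / l T ^ 2) * (4 * L / I T) ^ 2) :
    (fun T => log ((M : ℝ) * B T * (1 + b T))) =O[atTop] log := by
  have hprod := ((B_isBigO_id hc₁ hl hI hB).const_mul_left (M : ℝ)).mul
    (one_add_b_isBigO_one hc₁ hc₂ hl hI hb)
  refine isBigO_log_comp_of_isBigO_id (by simpa only [mul_one] using hprod) ?_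
  filter_upwards [eventually_gt_atTop 1] with T hT
  obtain ⟨hl₀, -⟩ := l_nonneg_and_le hc₁ hl hT
  have hM₁ : (1 : ℝ) ≤ M := by exact_mod_cast one_le_two.trans hM
  have hB₁ : 1 ≤ B T := by
    rw [hB T hT]
    exact le_add_of_le_of_nonneg one_le_two (by positivity)
  have hb₀ : 0 ≤ b T := by rw [hb T hT]; positivity
  exact one_le_mul_of_one_le_of_one_le (one_le_mul_of_one_le_of_one_le hM₁ hB₁) (by linarith)

theorem q_isBigO (hc₁ : 0 < c₁) (hc₂ : 0 < c₂) (hM : 2 ≤ M)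
    (hl : ∀ T > 1, l T = c₁ * T ^ (-(1 : ℝ) / 6))
    (hI : ∀ T > 1, I T = c₂ * log T ^ (-(1 : ℝ) / 4))
    (hb : ∀ T > 1, b T = (l T ^ 3 / (4 * (1 + l T) ^ 3)) * (I T / (4 * L)) ^ 2)
    (hB : ∀ T > 1, B T = 2 + (2 * (1 + l T) ^ 2 / l T ^ 2) * (4 * L / I T) ^ 2)
    (hq : ∀ T > 1, q T = 1 + (1 / b T) * (1 + log ((M : ℝ) * B T * (1 + b T)))) :
    q =O[atTop] fun T => T ^ ((5 : ℝ) / 6) * log T ^ ((1 : ℝ) / 2) := by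
  have hone :
      (fun _ => (1 : ℝ)) =O[atTop] fun T => T ^ ((5 : ℝ) / 6) * log T ^ ((1 : ℝ) / 2) := by
    refine (isBigO_const_left_iff_pos_le_norm one_ne_zero).2 ⟨1, one_pos, ?_⟩
    filter_upwards [eventually_ge_atTop 1, tendsto_log_atTop.eventually_ge_atTop 1]
      with T hT hlog
    rw [norm_of_nonneg (by positivity)]
    exact one_le_mul_of_one_le_of_one_le (one_le_rpow hT (by norm_num))
      (one_le_rpow hlog (by norm_num))
  have hlog :
      (fun T => 1 + log ((M : ℝ) * B T * (1 + b T))) =O[atTop] fun T => T ^ ((1 : ℝ) / 3) :=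
    (isLittleO_const_log_atTop.isBigO.add
      (log_mul_B_mul_isBigO_log hM hc₁ hc₂ hl hI hb hB)).trans
        (isLittleO_log_rpow_atTop (by norm_num)).isBigO
  have hprod : (fun T => (b T)⁻¹ * (1 + log ((M : ℝ) * B T * (1 + b T)))) =O[atTop]
      fun T => T ^ ((5 : ℝ) / 6) * log T ^ ((1 : ℝ) / 2) := by
    refine ((inv_b_isBigO hc₁ hl hI hb).mul hlog).trans_eventuallyEq ?_
    filter_upwards [eventually_gt_atTop 0] with T hT
    rw [mul_right_comm, ← rpow_add hT]
    norm_num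
  refine (hone.add hprod).congr' ?_ EventuallyEq.rfl
  filter_upwards [eventually_gt_atTop 1] with T hT
  rw [hq T hT, one_div]

end Asymptotics

end Threshold

theorem threshold_sublinear_general (L c₁ c₂ : ℝ) (hc₁ : 0 < c₁) (hc₂ : 0 < c₂)
    (M : ℕ) (hM : 2 ≤ M)
    (ε l I b B q : ℝ → ℝ)
    (hε : ∀ T > 1, ε T = Real.log T ^ (-(1 : ℝ) / 4))
    (hl : ∀ T > 1, l T = c₁ * T ^ (-(1 : ℝ) / 6))
    (hI : ∀ T > 1, I T = c₂ * ε T)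
    (hb : ∀ T > 1, b T = (l T ^ 3 / (4 * (1 + l T) ^ 3)) * (I T / (4 * L)) ^ 2)
    (hB : ∀ T > 1, B T = 2 + (2 * (1 + l T) ^ 2 / l T ^ 2) * (4 * L / I T) ^ 2)
    (hq : ∀ T > 1, q T = 1 + (1 / b T) * (1 + Real.log ((M : ℝ) * B T * (1 + b T)))) :
    Tendsto (fun T => q T / T) atTop (nhds 0) ∧
      ∃ C₀ > (0 : ℝ), ∃ T₀ : ℝ, ∀ T ≥ T₀,
        q T ≤ C₀ * T ^ ((5 : ℝ) / 6) * Real.log T ^ ((1 : ℝ) / 2) := by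
  have hIlog : ∀ T > 1, I T = c₂ * log T ^ (-(1 : ℝ) / 4) := fun T hT => by
    rw [hI T hT, hε T hT]
  have hq_isBigO := Threshold.q_isBigO hc₁ hc₂ hM hl hIlog hb hB hq
  refine ⟨(hq_isBigO.trans_isLittleO ?_).tendsto_div_nhds_zero, ?_⟩
  · exact (isLittleO_rpow_mul_log_rpow _ (by norm_num : (5 : ℝ) / 6 < 1)).congr_right rpow_one
  obtain ⟨C₀, hC₀, hC⟩ := hq_isBigO.exists_pos
  obtain ⟨T₀, hT₀⟩ := eventually_atTop.mp (hC.bound.and (eventually_ge_atTop 1))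
  refine ⟨C₀, hC₀, T₀, fun T hT => ?_⟩
  obtain ⟨hqT, hT₁⟩ := hT₀ T hT
  have hlog := log_nonneg hT₁
  calc q T ≤ ‖q T‖ := le_abs_self _
    _ ≤ C₀ * ‖T ^ ((5 : ℝ) / 6) * log T ^ ((1 : ℝ) / 2)‖ := hqT
    _ = C₀ * T ^ ((5 : ℝ) / 6) * log T ^ ((1 : ℝ) / 2) := by
      rw [norm_of_nonneg (by positivity), mul_assoc]

/-- Lemma 2 of the paper: the threshold `q(l, n, I(T))` of the proposed test is sublinear
in `T`; in fact `q(T) ∈ O(T^{5/6} (log T)^{1/2})`. -/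
theorem threshold_sublinear (L c₁ c₂ : ℝ) (hL : 0 < L) (hc₁ : 0 < c₁) (hc₂ : 0 < c₂)
    (M : ℕ) (hM : 2 ≤ M)
    (ε l I b B q : ℝ → ℝ)
    (hε : ∀ T > 1, ε T = Real.log T ^ (-(1 : ℝ) / 4))
    (hl : ∀ T > 1, l T = c₁ * T ^ (-(1 : ℝ) / 6))
    (hI : ∀ T > 1, I T = c₂ * ε T)
    (hb : ∀ T > 1, b T = (l T ^ 3 / (4 * (1 + l T) ^ 3)) * (I T / (4 * L)) ^ 2)
    (hB : ∀ T > 1, B T = 2 + (2 * (1 + l T) ^ 2 / l T ^ 2) * (4 * L / I T) ^ 2)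
    (hq : ∀ T > 1, q T = 1 + (1 / b T) * (1 + Real.log ((M : ℝ) * B T * (1 + b T)))) :
    Tendsto (fun T => q T / T) atTop (nhds 0) ∧
      ∃ C₀ > (0 : ℝ), ∃ T₀ : ℝ, ∀ T ≥ T₀,
        q T ≤ C₀ * T ^ ((5 : ℝ) / 6) * Real.log T ^ ((1 : ℝ) / 2) :=
  threshold_sublinear_general L c₁ c₂ hc₁ hc₂ M hM ε l I b B q hε hl hI hb hB hq
end

section
/- Fix real constants L > 0, c₁ > 0, c₂ > 0 and an integer M ≥ 2, and for real T > 1 define ε(T) = (log T)^{−1/4}, l(T) = c₁·T^{−1/6}, I(T) = c₂·ε(T), b(T) = ( l(T)³ / (4·(1+l(T))³) )·( I(T)/(4L) )², B(T) = 2 + ( 2·(1+l(T))² / l(T)² )·( 4L/I(T) )², Δ(T) = −M·B(T)·(1 + b(T))·exp( −b(T)·(T − 1) ), and K(x) = √(e·x + 1) − 1. Then: (a) there exists T₀ such that for all T ≥ T₀, −e^{−1} ≤ Δ(T) < 0; and (b) (1/T)·( 1 − K(Δ(T))/b(T) ) → 0 as T → ∞. -/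
/-!
Since `(B - 2) * 2b = l / (1 + l) < 1`, we have `B ≤ 2 + (2b)⁻¹`, so `Δ / b` is bounded by a
polynomial in `b⁻¹` times `exp (-b (T - 1))`. Because `log T ≤ 3 T^(1/3)`, `b(T) ≥ κ T^(-2/3)`,
hence `b (T - 1)` grows like a positive power of `T` and `Δ / b → 0`; as `b` is bounded, also
`Δ → 0`, which gives (a). Finally `|K x| ≤ e |x|` for `x ≥ -1/e`, so `K(Δ) / b → 0` and the margin
`1 - K(Δ) / b` tends to `1`, which is `o(T)`.
-/

open Filter Topology Real

lemma abs_sqrt_add_one_sub_one_le {y : ℝ} (hy : -1 ≤ y) : |√(y + 1) - 1| ≤ |y| := by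
  have hs : 1 ≤ √(y + 1) + 1 := by linarith [sqrt_nonneg (y + 1)]
  have hrat : √(y + 1) - 1 = y / (√(y + 1) + 1) := by
    rw [eq_div_iff (by positivity)]
    linear_combination sq_sqrt (by linarith : 0 ≤ y + 1)
  rw [hrat, abs_div, abs_of_pos (by positivity : 0 < √(y + 1) + 1)]
  exact div_le_self (abs_nonneg y) hs

lemma tendsto_rpow_mul_exp_neg_mul_rpow_atTop_nhds_zero (s c : ℝ) {β : ℝ} (hc : 0 < c)
    (hβ : 0 < β) : Tendsto (fun T : ℝ => T ^ s * exp (-c * T ^ β)) atTop (𝓝 0) := by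
  refine ((tendsto_rpow_mul_exp_neg_mul_atTop_nhds_zero (s / β) c hc).comp
    (tendsto_rpow_atTop hβ)).congr' ?_
  filter_upwards [eventually_ge_atTop 0] with T hT
  simp only [Function.comp_apply, ← rpow_mul hT, mul_div_cancel₀ s hβ.ne']

lemma tendsto_inv_pow_mul_exp_neg_mul_sub_one {b : ℝ → ℝ} {κ α : ℝ} (hκ : 0 < κ)
    (hα : α < 1) (hb : ∀ᶠ T in atTop, κ * T ^ (-α) ≤ b T) (n : ℕ) :
    Tendsto (fun T => (b T)⁻¹ ^ n * exp (-b T * (T - 1))) atTop (𝓝 0) := by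
  have hlim : Tendsto (fun T : ℝ => κ⁻¹ ^ n * (T ^ (α * n) * exp (-(κ / 2) * T ^ (1 - α))))
      atTop (𝓝 0) := by
    simpa using (tendsto_rpow_mul_exp_neg_mul_rpow_atTop_nhds_zero (α * n) (κ / 2)
      (by positivity) (sub_pos.2 hα)).const_mul (κ⁻¹ ^ n)
  refine squeeze_zero' ?_ ?_ hlim
  · filter_upwards [hb, eventually_gt_atTop 0] with T hbT hT
    have : 0 < b T := (by positivity : 0 < κ * T ^ (-α)).trans_le hbT
    positivity
  · filter_upwards [hb, eventually_ge_atTop 2] with T hbT hT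
    have hT0 : 0 < T := by linarith
    have hlow : 0 < κ * T ^ (-α) := by positivity
    have hbpos : 0 < b T := hlow.trans_le hbT
    have hinv : (b T)⁻¹ ^ n ≤ κ⁻¹ ^ n * T ^ (α * n) := by
      calc (b T)⁻¹ ^ n ≤ (κ * T ^ (-α))⁻¹ ^ n := by gcongr
        _ = κ⁻¹ ^ n * T ^ (α * n) := by
          rw [mul_inv, rpow_neg hT0.le, inv_inv, mul_pow, ← rpow_natCast (T ^ α),
            ← rpow_mul hT0.le]
    have hexp : -b T * (T - 1) ≤ -(κ / 2) * T ^ (1 - α) := by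
      have hsplit : T ^ (1 - α) = T ^ (-α) * T := by
        rw [← rpow_add_one hT0.ne']; ring_nf
      rw [hsplit]
      nlinarith
    calc (b T)⁻¹ ^ n * exp (-b T * (T - 1))
        ≤ κ⁻¹ ^ n * T ^ (α * n) * exp (-(κ / 2) * T ^ (1 - α)) := by
          gcongr
      _ = _ := mul_assoc _ _ _

lemma tendsto_mul_mul_one_add_mul_exp_div {b B : ℝ → ℝ} {κ α M : ℝ} (hκ : 0 < κ)
    (hα : α < 1) (hM : 0 ≤ M) (hκb : ∀ᶠ T in atTop, κ * T ^ (-α) ≤ b T)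
    (hB : ∀ᶠ T in atTop, 0 ≤ B T ∧ B T ≤ 2 + (2 * b T)⁻¹) :
    Tendsto (fun T => M * B T * (1 + b T) * exp (-b T * (T - 1)) / b T) atTop (𝓝 0) := by
  have decay := tendsto_inv_pow_mul_exp_neg_mul_sub_one hκ hα hκb
  have hlim := (((decay 0).const_mul 2).add (((decay 1).const_mul (5 / 2)).add
    ((decay 2).const_mul 2⁻¹))).const_mul M
  simp only [mul_zero, add_zero] at hlim
  refine squeeze_zero' ?_ ?_ hlim
  · filter_upwards [hκb, hB, eventually_gt_atTop 0] with T hbT hBT hT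
    have : 0 < b T := (by positivity : 0 < κ * T ^ (-α)).trans_le hbT
    have := hBT.1
    positivity
  · filter_upwards [hκb, hB, eventually_gt_atTop 0] with T hbT hBT hT
    have hb0 : 0 < b T := (by positivity : 0 < κ * T ^ (-α)).trans_le hbT
    calc M * B T * (1 + b T) * exp (-b T * (T - 1)) / b T
        ≤ M * (2 + (2 * b T)⁻¹) * (1 + b T) * exp (-b T * (T - 1)) / b T := by
          gcongr; exact hBT.2
      _ = _ := by field_simp; ring

lemma tendsto_sqrt_mul_add_one_sub_one_div {x b : ℝ → ℝ} {c : ℝ}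
    (hb : ∀ᶠ T in atTop, 0 < b T) (hx : ∀ᶠ T in atTop, -1 ≤ c * x T)
    (h : Tendsto (fun T => x T / b T) atTop (𝓝 0)) :
    Tendsto (fun T => (√(c * x T + 1) - 1) / b T) atTop (𝓝 0) := by
  have hlim := h.abs.const_mul |c|
  rw [abs_zero, mul_zero] at hlim
  refine squeeze_zero_norm' ?_ hlim
  filter_upwards [hb, hx] with T hbT hxT
  rw [norm_div, norm_of_nonneg hbT.le, norm_eq_abs, abs_div, abs_of_pos hbT, ← mul_div_assoc,
    ← abs_mul]
  exact div_le_div_of_nonneg_right (abs_sqrt_add_one_sub_one_le hxT) hbT.le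

lemma two_mul_one_add_sq_div_sq_mul_sq_le {l I L : ℝ} (hl : 0 < l) (hI : I ≠ 0) (hL : L ≠ 0) :
    2 * (1 + l) ^ 2 / l ^ 2 * (4 * L / I) ^ 2 ≤
      (2 * (l ^ 3 / (4 * (1 + l) ^ 3) * (I / (4 * L)) ^ 2))⁻¹ := by
  have hid : 2 * (1 + l) ^ 2 / l ^ 2 * (4 * L / I) ^ 2 =
      l / (1 + l) * (2 * (l ^ 3 / (4 * (1 + l) ^ 3) * (I / (4 * L)) ^ 2))⁻¹ := by
    field_simp
    ring
  rw [hid]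
  exact mul_le_of_le_one_left (by positivity) ((div_le_one (by positivity)).2 (by linarith))

lemma mul_rpow_le_log_rpow {T : ℝ} (hT : 1 < T) :
    3 ^ (-(1 : ℝ) / 4) * T ^ (-(1 : ℝ) / 12) ≤ log T ^ (-(1 : ℝ) / 4) := by
  have hT0 : 0 ≤ T := by linarith
  calc 3 ^ (-(1 : ℝ) / 4) * T ^ (-(1 : ℝ) / 12) = (T ^ (1 / 3 : ℝ) / (1 / 3)) ^ (-(1 : ℝ) / 4) := by
        rw [div_div_eq_mul_div, div_one, mul_comm, mul_rpow (by positivity) (by norm_num),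
          ← rpow_mul hT0]
        norm_num
    _ ≤ log T ^ (-(1 : ℝ) / 4) :=
        rpow_le_rpow_of_nonpos (log_pos hT) (log_le_rpow_div hT0 (by norm_num)) (by norm_num)

lemma exists_mul_rpow_le_b {L c₁ c₂ : ℝ} {ε l I b : ℝ → ℝ} (hL : 0 < L) (hc₁ : 0 < c₁)
    (hc₂ : 0 < c₂) (hε : ∀ T > 1, ε T = Real.log T ^ (-(1 : ℝ) / 4))
    (hl : ∀ T > 1, l T = c₁ * T ^ (-(1 : ℝ) / 6)) (hI : ∀ T > 1, I T = c₂ * ε T)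
    (hb : ∀ T > 1, b T = (l T ^ 3 / (4 * (1 + l T) ^ 3)) * (I T / (4 * L)) ^ 2) :
    ∃ κ > 0, ∀ T > 1, κ * T ^ (-(2 / 3 : ℝ)) ≤ b T := by
  set a := c₁ / (1 + c₁)
  set d := c₂ * 3 ^ (-(1 : ℝ) / 4) / (4 * L)
  refine ⟨a ^ 3 * d ^ 2 / 4, by positivity, fun T hT => ?_⟩
  have hT0 : 0 < T := by linarith
  have hl0 : 0 < l T := by rw [hl T hT]; positivity
  have hr : a * T ^ (-(1 : ℝ) / 6) ≤ l T / (1 + l T) := by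
    have hle : l T ≤ c₁ := by
      rw [hl T hT]
      exact mul_le_of_le_one_right hc₁.le (rpow_le_one_of_one_le_of_nonpos hT.le (by norm_num))
    calc a * T ^ (-(1 : ℝ) / 6) = l T / (1 + c₁) := by rw [hl T hT]; ring
      _ ≤ l T / (1 + l T) := by gcongr
  have hy : d * T ^ (-(1 : ℝ) / 12) ≤ I T / (4 * L) := by
    rw [hI T hT, hε T hT]
    calc d * T ^ (-(1 : ℝ) / 12) = c₂ * (3 ^ (-(1 : ℝ) / 4) * T ^ (-(1 : ℝ) / 12)) / (4 * L) := by
          ring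
      _ ≤ c₂ * log T ^ (-(1 : ℝ) / 4) / (4 * L) := by gcongr; exact mul_rpow_le_log_rpow hT
  have hpow : T ^ (-(2 / 3 : ℝ)) = (T ^ (-(1 : ℝ) / 6)) ^ 3 * (T ^ (-(1 : ℝ) / 12)) ^ 2 := by
    rw [← rpow_natCast, ← rpow_natCast, ← rpow_mul hT0.le, ← rpow_mul hT0.le, ← rpow_add hT0]
    norm_num
  calc a ^ 3 * d ^ 2 / 4 * T ^ (-(2 / 3 : ℝ))
      = (a * T ^ (-(1 : ℝ) / 6)) ^ 3 / 4 * (d * T ^ (-(1 : ℝ) / 12)) ^ 2 := by rw [hpow]; ring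
    _ ≤ (l T / (1 + l T)) ^ 3 / 4 * (I T / (4 * L)) ^ 2 := by gcongr
    _ = b T := by rw [hb T hT, div_pow]; field_simp

lemma eventually_norm_b_le {L c₁ c₂ : ℝ} {ε l I b : ℝ → ℝ} (hL : 0 < L) (hc₁ : 0 < c₁)
    (hc₂ : 0 < c₂) (hε : ∀ T > 1, ε T = Real.log T ^ (-(1 : ℝ) / 4))
    (hl : ∀ T > 1, l T = c₁ * T ^ (-(1 : ℝ) / 6)) (hI : ∀ T > 1, I T = c₂ * ε T)
    (hb : ∀ T > 1, b T = (l T ^ 3 / (4 * (1 + l T) ^ 3)) * (I T / (4 * L)) ^ 2) :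
    ∀ᶠ T in atTop, ‖b T‖ ≤ (c₂ / (4 * L)) ^ 2 / 4 := by
  filter_upwards [eventually_ge_atTop (exp 1)] with T hT
  have hT1 : 1 < T := (one_lt_exp_iff.2 one_pos).trans_le hT
  have hlog : 1 ≤ log T := (le_log_iff_exp_le (by linarith)).2 hT
  have hl0 : 0 < l T := by rw [hl T hT1]; positivity
  have hI0 : 0 ≤ I T := by rw [hI T hT1, hε T hT1]; positivity
  have hIc : I T ≤ c₂ := by
    rw [hI T hT1, hε T hT1]
    exact mul_le_of_le_one_right hc₂.le (rpow_le_one_of_one_le_of_nonpos hlog (by norm_num))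
  have hr : l T / (1 + l T) ≤ 1 := (div_le_one (by positivity)).2 (by linarith)
  have hbT : b T = (l T / (1 + l T)) ^ 3 / 4 * (I T / (4 * L)) ^ 2 := by
    rw [hb T hT1, div_pow]; field_simp
  rw [hbT, norm_of_nonneg (by positivity)]
  calc (l T / (1 + l T)) ^ 3 / 4 * (I T / (4 * L)) ^ 2 ≤ 1 ^ 3 / 4 * (c₂ / (4 * L)) ^ 2 := by
        gcongr
    _ = (c₂ / (4 * L)) ^ 2 / 4 := by ring

lemma B_mem_Icc_two_add_inv {L c₁ c₂ : ℝ} {ε l I b B : ℝ → ℝ} (hL : 0 < L) (hc₁ : 0 < c₁)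
    (hc₂ : 0 < c₂) (hε : ∀ T > 1, ε T = Real.log T ^ (-(1 : ℝ) / 4))
    (hl : ∀ T > 1, l T = c₁ * T ^ (-(1 : ℝ) / 6)) (hI : ∀ T > 1, I T = c₂ * ε T)
    (hb : ∀ T > 1, b T = (l T ^ 3 / (4 * (1 + l T) ^ 3)) * (I T / (4 * L)) ^ 2)
    (hB : ∀ T > 1, B T = 2 + (2 * (1 + l T) ^ 2 / l T ^ 2) * (4 * L / I T) ^ 2) :
    ∀ T > 1, B T ∈ Set.Icc 2 (2 + (2 * b T)⁻¹) := by
  intro T hT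
  have hl0 : 0 < l T := by rw [hl T hT]; positivity
  have hI0 : 0 < I T := by
    have := log_pos hT
    rw [hI T hT, hε T hT]; positivity
  rw [hB T hT, hb T hT]
  refine ⟨le_add_of_nonneg_right (by positivity), ?_⟩
  gcongr
  exact two_mul_one_add_sq_div_sq_mul_sq_le hl0 hI0.ne' hL.ne'

/-- Table I quantities of the paper: (a) for `T` large, `Δ(T)` lies in `[-1/e, 0)` (the
domain of the function `K` and of the principal Lambert-W branch); (b) the threshold margin
`1 − K(Δ(T))/b(T)` is `o(T)`. -/
theorem delta_in_domain_and_margin_sublinear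
    (L c₁ c₂ : ℝ) (hL : 0 < L) (hc₁ : 0 < c₁) (hc₂ : 0 < c₂)
    (M : ℕ) (hM : 2 ≤ M)
    (ε l I b B Δ : ℝ → ℝ) (K : ℝ → ℝ)
    (hε : ∀ T > 1, ε T = Real.log T ^ (-(1 : ℝ) / 4))
    (hl : ∀ T > 1, l T = c₁ * T ^ (-(1 : ℝ) / 6))
    (hI : ∀ T > 1, I T = c₂ * ε T)
    (hb : ∀ T > 1, b T = (l T ^ 3 / (4 * (1 + l T) ^ 3)) * (I T / (4 * L)) ^ 2)
    (hB : ∀ T > 1, B T = 2 + (2 * (1 + l T) ^ 2 / l T ^ 2) * (4 * L / I T) ^ 2)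
    (hΔ : ∀ T > 1, Δ T = -((M : ℝ) * B T * (1 + b T)) * Real.exp (-(b T) * (T - 1)))
    (hK : ∀ x : ℝ, K x = Real.sqrt (Real.exp 1 * x + 1) - 1) :
    (∃ T₀ : ℝ, ∀ T ≥ T₀, -Real.exp (-1) ≤ Δ T ∧ Δ T < 0) ∧
      Tendsto (fun T => (1 / T) * (1 - K (Δ T) / b T)) atTop (nhds 0) := by
  have hM0 : (0 : ℝ) < M := by exact_mod_cast (by omega : 0 < M)
  have h1 : ∀ᶠ T in atTop, (1 : ℝ) < T := eventually_gt_atTop 1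
  obtain ⟨κ, hκ, hκb⟩ := exists_mul_rpow_le_b hL hc₁ hc₂ hε hl hI hb
  have hb0 : ∀ T > 1, 0 < b T := fun T hT => lt_of_lt_of_le (by positivity) (hκb T hT)
  have hB2 := B_mem_Icc_two_add_inv hL hc₁ hc₂ hε hl hI hb hB
  have hΔb : Tendsto (fun T => Δ T / b T) atTop (𝓝 0) := by
    have h := (tendsto_mul_mul_one_add_mul_exp_div hκ (by norm_num : (2 / 3 : ℝ) < 1) hM0.le
      (h1.mono hκb) (h1.mono fun T hT => ⟨zero_le_two.trans (hB2 T hT).1, (hB2 T hT).2⟩)).neg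
    rw [neg_zero] at h
    refine h.congr' (h1.mono fun T hT => ?_)
    simp only [hΔ T hT]
    ring
  have hΔ0 : Tendsto Δ atTop (𝓝 0) := (hΔb.zero_mul_isBoundedUnder_le
    (isBoundedUnder_of_eventually_le (eventually_norm_b_le hL hc₁ hc₂ hε hl hI hb))).congr'
    (h1.mono fun T hT => div_mul_cancel₀ _ (hb0 T hT).ne')
  have hΔ_ge : ∀ᶠ T in atTop, -exp (-1) ≤ Δ T :=
    hΔ0.eventually (Ici_mem_nhds (neg_neg_of_pos (exp_pos _)))
  refine ⟨eventually_atTop.1 ((hΔ_ge.and h1).mono fun T hT => ⟨hT.1, ?_⟩), ?_⟩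
  · have := hb0 T hT.2
    have := (hB2 T hT.2).1
    rw [hΔ T hT.2]
    exact mul_neg_of_neg_of_pos (neg_neg_of_pos (by positivity)) (exp_pos _)
  have hKb : Tendsto (fun T => K (Δ T) / b T) atTop (𝓝 0) := by
    simp only [hK]
    refine tendsto_sqrt_mul_add_one_sub_one_div (h1.mono hb0) (hΔ_ge.mono fun T hT => ?_) hΔb
    have := mul_le_mul_of_nonneg_left hT (exp_pos 1).le
    rwa [mul_neg, ← exp_add, add_neg_cancel, exp_zero] at this
  simpa using tendsto_inv_atTop_zero.mul (tendsto_const_nhds.sub hKb)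
end

section
/- Define K(x) = √(e·x + 1) − 1 for real x, where e is Euler's number. Then for every x with −e^{−1} ≤ x ≤ 0, K(x) ≤ x·e^{−K(x)}. -/
/-! Put `t = √(e·x + 1) ∈ [0, 1]`, so that `e·x = t² − 1`. The claim becomes
`t − 1 ≤ (t − 1)·(t + 1)·e^{−t}`, which holds because `t − 1 ≤ 0` and `(t + 1)·e^{−t} ≤ 1`,
i.e. `t + 1 ≤ e^t`. -/

open Real

lemma add_one_mul_exp_neg_le_one (t : ℝ) : (t + 1) * exp (-t) ≤ 1 := by
  rw [exp_neg, ← div_eq_mul_inv, div_le_one (exp_pos t)]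
  exact add_one_le_exp t

lemma sub_one_le_sq_sub_one_mul_exp_neg {t : ℝ} (ht : t ≤ 1) :
    t - 1 ≤ (t ^ 2 - 1) * exp (-t) := by
  have hfactor : (t ^ 2 - 1) * exp (-t) = (t - 1) * ((t + 1) * exp (-t)) := by ring
  rw [hfactor]
  nlinarith [add_one_mul_exp_neg_le_one t]

/-- The Lambert-W comparison step (Eqs. (39)–(44)): with `K(x) = √(e·x + 1) − 1`, for every
`x ∈ [−e^{−1}, 0]`, one has `K(x) ≤ x·e^{−K(x)}`. -/
theorem K_le_mul_exp_neg_K (x : ℝ) (hx₁ : -Real.exp (-1) ≤ x) (hx₂ : x ≤ 0) :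
    Real.sqrt (Real.exp 1 * x + 1) - 1 ≤
      x * Real.exp (-(Real.sqrt (Real.exp 1 * x + 1) - 1)) := by
  have hex : -1 ≤ exp 1 * x := by
    have := mul_le_mul_of_nonneg_left hx₁ (exp_pos 1).le
    rwa [mul_neg, ← exp_add, add_neg_cancel, exp_zero] at this
  set t := √(exp 1 * x + 1)
  have ht_sq : t ^ 2 = exp 1 * x + 1 := sq_sqrt (by linarith)
  have ht_le : t ≤ 1 := sqrt_le_one.mpr (by nlinarith [exp_pos 1])
  have hrhs : x * exp (-(t - 1)) = (t ^ 2 - 1) * exp (-t) := by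
    rw [ht_sq, neg_sub, sub_eq_add_neg, exp_add]
    ring
  rw [hrhs]
  exact sub_one_le_sq_sub_one_mul_exp_neg ht_le
end

section
/- Let b > 0, M ≥ 2, B ≥ 2 and T be real numbers with T ≥ 1 + (1/b)·( 1 + log( M·B·(1 + b) ) ). Define Δ = −M·B·(1 + b)·exp( −b·(T − 1) ), K = √(e·Δ + 1) − 1, and let κ = ⌈ T − 1 + K/b ⌉ (a nonnegative integer). Then −e^{−1} ≤ Δ < 0, and Σ_{k=0}^{∞} M·B·exp( −(κ + k)·b ) ≤ −K/b; that is, Σ_{k ≥ κ} M·B·e^{−k·b} ≤ −K/b. -/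
/-!
With `C = M·B·(1+b)`, the hypothesis on `T` reads `b(T−1) ≥ 1 + log C`, which is exactly
`Δ = −C·e^{−b(T−1)} ≥ −e^{−1}`. On `[−e^{−1}, 0]`, `K` lies below Lambert's `W₀`, i.e.
`K·e^K ≤ Δ`. The tail is geometric, equal to `M·B·e^{−κb}/(1 − e^{−b})`; bounding
`1/(1 − e^{−b}) ≤ (1+b)/b` and `e^{−κb} ≤ e^{−b(T−1)}·e^{−K}` (choice of `κ`) makes it
at most `−Δ·e^{−K}/b`, and `K·e^K ≤ Δ` turns this into `−K/b`.
-/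

open Real

namespace TailSum

/-- The paper's `K`, a lower bound for Lambert's `W₀` on `[−e⁻¹, 0]`. -/
noncomputable def lambertLower (x : ℝ) : ℝ := √(exp 1 * x + 1) - 1

lemma neg_one_le_lambertLower (x : ℝ) : -1 ≤ lambertLower x := by
  unfold lambertLower
  linarith [sqrt_nonneg (exp 1 * x + 1)]

lemma lambertLower_mul_exp_le {x : ℝ} (hlow : -exp (-1) ≤ x) (hx : x ≤ 0) :
    lambertLower x * exp (lambertLower x) ≤ x := by
  have he : exp 1 * exp (-1) = 1 := by rw [← exp_add]; norm_num
  have hpos : 0 ≤ exp 1 * x + 1 := by nlinarith [exp_pos 1]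
  have hle : exp 1 * x + 1 ≤ 1 := by nlinarith [exp_pos 1]
  set s := √(exp 1 * x + 1)
  have hs0 : 0 ≤ s := sqrt_nonneg _
  have hs2 : s ^ 2 = exp 1 * x + 1 := sq_sqrt hpos
  have hs1 : s ≤ 1 := by nlinarith
  have hx_eq : x = (s ^ 2 - 1) * exp (-1) := by
    linear_combination (-exp (-1)) * hs2 - x * he
  -- `(s − 1)·eˢ ≤ (s − 1)(s + 1)` because `s − 1 ≤ 0` and `eˢ ≥ s + 1`.
  have key : (s - 1) * exp s ≤ s ^ 2 - 1 := by
    nlinarith [add_one_le_exp s]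
  have hsplit : exp (s - 1) = exp s * exp (-1) := by rw [← exp_add]; ring_nf
  rw [show lambertLower x = s - 1 from rfl, hsplit, hx_eq, ← mul_assoc]
  exact mul_le_mul_of_nonneg_right key (exp_pos _).le

lemma mul_exp_neg_le_exp_neg_one {C y : ℝ} (hC : 0 < C) (hy : 1 + log C ≤ y) :
    C * exp (-y) ≤ exp (-1) := by
  calc C * exp (-y) = exp (log C - y) := by rw [exp_sub, exp_log hC, div_eq_mul_inv, exp_neg]
    _ ≤ exp (-1) := exp_le_exp.mpr (by linarith)

lemma tsum_mul_exp_neg_add_mul (c κ : ℝ) {b : ℝ} (hb : 0 < b) :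
    ∑' k : ℕ, c * exp (-(κ + k) * b) = c * exp (-κ * b) / (1 - exp (-b)) := by
  have hterm (k : ℕ) : c * exp (-(κ + k) * b) = c * exp (-κ * b) * exp (-b) ^ k := by
    rw [← exp_nat_mul, mul_assoc, ← exp_add]
    ring_nf
  simp_rw [hterm]
  rw [tsum_mul_left, tsum_geometric_of_lt_one (exp_pos _).le (exp_lt_one_iff.mpr (by linarith)),
    div_eq_mul_inv]

lemma inv_one_sub_exp_neg_le {b : ℝ} (hb : 0 < b) : (1 - exp (-b))⁻¹ ≤ (1 + b) / b := by
  have hlt : exp (-b) < 1 := exp_lt_one_iff.mpr (by linarith)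
  have hexp : (1 + b) * exp (-b) ≤ 1 := by
    rw [exp_neg, mul_inv_le_iff₀ (exp_pos b)]
    linarith [add_one_le_exp b]
  rw [le_div_iff₀ hb, inv_mul_le_iff₀ (by linarith)]
  nlinarith

lemma neg_mul_exp_neg_le_neg {K x : ℝ} (h : K * exp K ≤ x) : -x * exp (-K) ≤ -K := by
  have := mul_le_mul_of_nonneg_right h (exp_pos (-K)).le
  rw [mul_assoc, ← exp_add, add_neg_cancel, exp_zero, mul_one] at this
  linarith

lemma exp_neg_mul_le_of_add_div_le {b t K κ : ℝ} (hb : 0 < b) (h : t + K / b ≤ κ) :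
    exp (-κ * b) ≤ exp (-b * t) * exp (-K) := by
  rw [← exp_add, exp_le_exp]
  have := mul_le_mul_of_nonneg_right h hb.le
  rw [add_mul, div_mul_cancel₀ K hb.ne'] at this
  linarith

end TailSum

open TailSum in
/-- Section V-B computation (Eqs. (38)–(44)): for `b > 0`, `M, B ≥ 2` and
`T ≥ 1 + (1/b)(1 + log(M·B·(1+b)))`, setting `Δ = −M·B·(1+b)·e^{−b(T−1)}`,
`K = √(e·Δ + 1) − 1` and `κ = ⌈T − 1 + K/b⌉` (a nonnegative integer), one has
`−e^{−1} ≤ Δ < 0` and `Σ_{k≥κ} M·B·e^{−k·b} ≤ −K/b`. -/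
theorem tail_sum_le_neg_K_div_b (b M B T : ℝ) (hb : 0 < b) (hM : 2 ≤ M) (hB : 2 ≤ B)
    (hT : 1 + (1 / b) * (1 + Real.log (M * B * (1 + b))) ≤ T) :
    ∀ Δ K : ℝ, Δ = -(M * B * (1 + b)) * Real.exp (-b * (T - 1)) →
      K = Real.sqrt (Real.exp 1 * Δ + 1) - 1 →
      -Real.exp (-1) ≤ Δ ∧ Δ < 0 ∧ 0 ≤ ⌈T - 1 + K / b⌉ ∧
        (∑' k : ℕ, M * B * Real.exp (-(((⌈T - 1 + K / b⌉ : ℤ) : ℝ) + (k : ℝ)) * b))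
          ≤ -K / b := by
  intro Δ K hΔ hK
  have hMB : 0 ≤ M * B := by nlinarith
  have hC : 1 < M * B * (1 + b) := by nlinarith
  have hy : 1 + log (M * B * (1 + b)) ≤ b * (T - 1) := by
    have h : 1 / b * (1 + log (M * B * (1 + b))) ≤ T - 1 := by linarith
    rwa [one_div, inv_mul_le_iff₀ hb] at h
  have hΔlow : -exp (-1) ≤ Δ := by
    have h := mul_exp_neg_le_exp_neg_one (by linarith) hy
    rw [← neg_mul] at h
    rw [hΔ]; linarith
  have hΔneg : Δ < 0 := by rw [hΔ]; nlinarith [exp_pos (-b * (T - 1))]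
  have hK1 : -1 ≤ K := hK ▸ neg_one_le_lambertLower Δ
  have hKW : K * exp K ≤ Δ := hK ▸ lambertLower_mul_exp_le hΔlow hΔneg.le
  have hκ_pos : 0 < T - 1 + K / b := by
    have hnum : 0 < b * (T - 1) + K := by linarith [log_pos hC]
    have : T - 1 + K / b = (b * (T - 1) + K) / b := by field_simp
    rw [this]; positivity
  refine ⟨hΔlow, hΔneg, Int.ceil_nonneg hκ_pos.le, ?_⟩
  set κ : ℝ := ((⌈T - 1 + K / b⌉ : ℤ) : ℝ)
  have hexpκ := exp_neg_mul_le_of_add_div_le hb (Int.le_ceil (T - 1 + K / b))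
  have h1b : 0 ≤ (1 - exp (-b))⁻¹ :=
    inv_nonneg.mpr (sub_nonneg.mpr (exp_le_one_iff.mpr (by linarith)))
  rw [tsum_mul_exp_neg_add_mul _ _ hb, div_eq_mul_inv]
  calc M * B * exp (-κ * b) * (1 - exp (-b))⁻¹
      ≤ M * B * (exp (-b * (T - 1)) * exp (-K)) * ((1 + b) / b) := by
        gcongr
        exact inv_one_sub_exp_neg_le hb
    _ = -Δ * exp (-K) / b := by rw [hΔ]; field_simp
    _ ≤ -K / b := by gcongr; exact neg_mul_exp_neg_le_neg hKW
end
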